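/- Consider the attitude error dynamics Ṙ_e = R_e R_p ê_ω R_pᵀ, J ė_ω = −R_pᵀ e_R − K_ω e_ω − ê_ω J e_ω − ê_ω J ω_p, where J is symmetric positive definite, K_ω is symmetric positive definite, K_R is symmetric with tr(K_R)I₃ − K_R positive definite, e_R := skew(K_R R_e)∨, and R_p(t) ∈ SO(3), ω_p(t) ∈ ℝ³ are arbitrary. Then the function V_R(R_e, e_ω) := (1/2) e_ωᵀ J e_ω + Ψ_{K_R}(R_e) satisfies along all solutions V̇_R = −e_ωᵀ K_ω e_ω ≤ 0. -/

import Mathlib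

open Matrix

attribute [local instance] Matrix.normedAddCommGroup Matrix.normedSpace

noncomputable section

/-- The hat map: ω ∈ ℝ³ ↦ skew-symmetric matrix ω̂ with ω̂ y = ω × y. -/
def hatM (ω : Fin 3 → ℝ) : Matrix (Fin 3) (Fin 3) ℝ :=
  !![0, -ω 2, ω 1; ω 2, 0, -ω 0; -ω 1, ω 0, 0]

/-- The vee map, inverse of the hat map on skew-symmetric matrices. -/
def veeM (A : Matrix (Fin 3) (Fin 3) ℝ) : Fin 3 → ℝ :=
  ![A 2 1, A 0 2, A 1 0]

/-- Skew-symmetric part: skew(A) = (A − Aᵀ)/2. -/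
def skewPart (A : Matrix (Fin 3) (Fin 3) ℝ) : Matrix (Fin 3) (Fin 3) ℝ :=
  (1 / 2 : ℝ) • (A - A.transpose)

/-- SO(3): 3×3 real orthogonal matrices with determinant 1. -/
def SO3 : Set (Matrix (Fin 3) (Fin 3) ℝ) :=
  {R | R.transpose * R = 1 ∧ R.det = 1}

/-- Navigation function Ψ_K(R) = (1/2) tr(K(I₃ − R)). -/
def PsiK (K R : Matrix (Fin 3) (Fin 3) ℝ) : ℝ :=
  (1 / 2) * (K * (1 - R)).trace



/-!
`V̇_R` is computed term by term. Since `J` is symmetric, the kinetic term has derivative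
`e_ω ⬝ J ė_ω`, and substituting the dynamics leaves `-e_ω ⬝ R_pᵀ e_R - e_ω ⬝ K_ω e_ω`: both
gyroscopic terms vanish because `e_ω ⬝ ê_ω a = 0`. The potential term has derivative
`-½ tr(K_R Ṙ_e) = -½ tr(K_R R_e (R_p e_ω)^)`, using `R_p ê_ω R_pᵀ = (R_p e_ω)^` on `SO(3)`, and
`-½ tr(B x̂) = x ⬝ skew(B)∨` turns this into `e_R ⬝ R_p e_ω`, which cancels the first term.
-/

lemma dotProduct_hatM_mulVec_self (x a : Fin 3 → ℝ) : x ⬝ᵥ hatM x *ᵥ a = 0 := by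
  simp only [dotProduct, mulVec, hatM, Fin.isValue, of_apply, cons_val', cons_val_fin_one,
    Fin.sum_univ_three, cons_val_zero, cons_val_one, cons_val, zero_mul, neg_mul, zero_add,
    add_zero]
  ring

lemma dotProduct_veeM_skewPart (B : Matrix (Fin 3) (Fin 3) ℝ) (x : Fin 3 → ℝ) :
    x ⬝ᵥ veeM (skewPart B) = -(1 / 2) * (B * hatM x).trace := by
  simp only [dotProduct, veeM, skewPart, one_div, Fin.isValue, Matrix.smul_apply,
    Matrix.sub_apply, transpose_apply, smul_eq_mul, Fin.sum_univ_three, cons_val_zero, cons_val_one,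
    cons_val, trace, hatM, diag_apply, mul_apply, of_apply, cons_val', cons_val_fin_one, mul_zero,
    zero_add, mul_neg, add_zero, neg_mul]
  ring

-- the cofactor identity `Aᵀ (A w)^ A = det A ŵ`; for `A ∈ SO(3)` it says `(A w)^ = A ŵ Aᵀ`
lemma transpose_mul_hatM_mulVec_mul (A : Matrix (Fin 3) (Fin 3) ℝ) (w : Fin 3 → ℝ) :
    Aᵀ * hatM (A *ᵥ w) * A = A.det • hatM w := by
  ext i j
  fin_cases i <;> fin_cases j <;>
    simp [hatM, mul_apply, mulVec, dotProduct, det_fin_three, Fin.sum_univ_three] <;> ring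

lemma mul_hatM_mul_transpose_of_mem_SO3 {P : Matrix (Fin 3) (Fin 3) ℝ} (hP : P ∈ SO3)
    (w : Fin 3 → ℝ) : P * hatM w * Pᵀ = hatM (P *ᵥ w) := by
  have hPPt : P * Pᵀ = 1 := mul_eq_one_comm.mp hP.1
  have hconj := transpose_mul_hatM_mulVec_mul P w
  rw [hP.2, one_smul] at hconj
  calc P * hatM w * Pᵀ = (P * Pᵀ) * hatM (P *ᵥ w) * (P * Pᵀ) := by
        simp only [← hconj, Matrix.mul_assoc]
    _ = hatM (P *ᵥ w) := by rw [hPPt, Matrix.one_mul, Matrix.mul_one]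

lemma PsiK_eq (K R : Matrix (Fin 3) (Fin 3) ℝ) :
    PsiK K R = (1 / 2) * (K.trace - (K * R).trace) := by
  rw [PsiK, Matrix.mul_sub, Matrix.mul_one, trace_sub]

section HasDerivAt

variable {ι κ : Type*} [Fintype ι] [Fintype κ] {t : ℝ}

theorem HasDerivAt.dotProduct {f g : ℝ → ι → ℝ} {f' g' : ι → ℝ} (hf : HasDerivAt f f' t)
    (hg : HasDerivAt g g' t) :
    HasDerivAt (fun s => f s ⬝ᵥ g s) (f' ⬝ᵥ g t + f t ⬝ᵥ g') t :=
  (HasDerivAt.fun_sum fun i _ =>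
    (hasDerivAt_pi.mp hf i).fun_mul (hasDerivAt_pi.mp hg i)).congr_deriv Finset.sum_add_distrib

theorem HasDerivAt.const_mulVec (A : Matrix κ ι ℝ) {f : ℝ → ι → ℝ} {f' : ι → ℝ}
    (hf : HasDerivAt f f' t) : HasDerivAt (fun s => A *ᵥ f s) (A *ᵥ f') t :=
  (LinearMap.toContinuousLinearMap A.mulVecLin).hasFDerivAt.comp_hasDerivAt t hf

theorem HasDerivAt.dotProduct_mulVec_self {J : Matrix ι ι ℝ} (hJ : J.IsSymm)
    {e : ℝ → ι → ℝ} {e' : ι → ℝ} (he : HasDerivAt e e' t) :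
    HasDerivAt (fun s => e s ⬝ᵥ J *ᵥ e s) (2 * (e t ⬝ᵥ J *ᵥ e')) t := by
  have hswap : e' ⬝ᵥ J *ᵥ e t = e t ⬝ᵥ J *ᵥ e' := by
    rw [← dotProduct_transpose_mulVec, hJ.eq]
  refine (he.dotProduct (he.const_mulVec J)).congr_deriv ?_
  rw [hswap, two_mul]

theorem HasDerivAt.trace_const_mul (K : Matrix ι ι ℝ) {R : ℝ → Matrix ι ι ℝ}
    {R' : Matrix ι ι ℝ} (hR : HasDerivAt R R' t) :
    HasDerivAt (fun s => (K * R s).trace) (K * R').trace t :=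
  (LinearMap.toContinuousLinearMap
    ((traceLinearMap ι ℝ ℝ).comp (LinearMap.mulLeft ℝ K))).hasFDerivAt.comp_hasDerivAt t hR

end HasDerivAt

theorem HasDerivAt.PsiK_of_attitude {K : Matrix (Fin 3) (Fin 3) ℝ}
    {R P : ℝ → Matrix (Fin 3) (Fin 3) ℝ} {e : ℝ → Fin 3 → ℝ} {t : ℝ} (hP : P t ∈ SO3)
    (hR : HasDerivAt R (R t * (P t * hatM (e t) * (P t)ᵀ)) t) :
    HasDerivAt (fun s => PsiK K (R s)) (veeM (skewPart (K * R t)) ⬝ᵥ P t *ᵥ e t) t := by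
  simp only [PsiK_eq]
  refine (((hR.trace_const_mul K).const_sub K.trace).const_mul (1 / 2 : ℝ)).congr_deriv ?_
  rw [mul_hatM_mul_transpose_of_mem_SO3 hP, dotProduct_comm, dotProduct_veeM_skewPart,
    Matrix.mul_assoc]
  ring

theorem lyapunov_attitude_error_general
    (J Kω KR : Matrix (Fin 3) (Fin 3) ℝ)
    (hJ : J.PosDef) (hKω : Kω.PosDef)
    (Re : ℝ → Matrix (Fin 3) (Fin 3) ℝ) (eω : ℝ → Fin 3 → ℝ)
    (Rp : ℝ → Matrix (Fin 3) (Fin 3) ℝ) (ωp : ℝ → Fin 3 → ℝ)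
    (hRp : ∀ t, Rp t ∈ SO3)
    (hdRe : ∀ t, HasDerivAt Re
      (Re t * (Rp t * hatM (eω t) * (Rp t).transpose)) t)
    (deω : ℝ → Fin 3 → ℝ)
    (hdeω : ∀ t, HasDerivAt eω (deω t) t)
    (hdyn : ∀ t, J.mulVec (deω t) =
      -((Rp t).transpose.mulVec (veeM (skewPart (KR * Re t))))
        - Kω.mulVec (eω t)
        - (hatM (eω t)).mulVec (J.mulVec (eω t))
        - (hatM (eω t)).mulVec (J.mulVec (ωp t))) :
    ∀ t, HasDerivAt
        (fun s => (1 / 2) * (eω s ⬝ᵥ J.mulVec (eω s)) + PsiK KR (Re s))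
        (-(eω t ⬝ᵥ Kω.mulVec (eω t))) t ∧
      -(eω t ⬝ᵥ Kω.mulVec (eω t)) ≤ 0 := by
  intro t
  have hJsymm : J.IsSymm := isHermitian_iff_isSymm.mp hJ.isHermitian
  have hkinetic := ((hdeω t).dotProduct_mulVec_self hJsymm).const_mul (1 / 2 : ℝ)
  have hpotential := (hdRe t).PsiK_of_attitude (K := KR) (hRp t)
  refine ⟨(hkinetic.add hpotential).congr_deriv ?_, ?_⟩
  · rw [← dotProduct_transpose_mulVec (Rp t), hdyn t]
    simp only [dotProduct_sub, dotProduct_neg, dotProduct_hatM_mulVec_self, sub_zero]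
    ring
  · simpa using hKω.posSemidef.dotProduct_mulVec_nonneg (eω t)

theorem lyapunov_attitude_error
    (J Kω KR : Matrix (Fin 3) (Fin 3) ℝ)
    (hJ : J.PosDef) (hKω : Kω.PosDef) (hKR : KR.IsSymm)
    (hKRpd : (KR.trace • (1 : Matrix (Fin 3) (Fin 3) ℝ) - KR).PosDef)
    (Re : ℝ → Matrix (Fin 3) (Fin 3) ℝ) (eω : ℝ → Fin 3 → ℝ)
    (Rp : ℝ → Matrix (Fin 3) (Fin 3) ℝ) (ωp : ℝ → Fin 3 → ℝ)
    (hRe : ∀ t, Re t ∈ SO3) (hRp : ∀ t, Rp t ∈ SO3)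
    (hdRe : ∀ t, HasDerivAt Re
      (Re t * (Rp t * hatM (eω t) * (Rp t).transpose)) t)
    (deω : ℝ → Fin 3 → ℝ)
    (hdeω : ∀ t, HasDerivAt eω (deω t) t)
    (hdyn : ∀ t, J.mulVec (deω t) =
      -((Rp t).transpose.mulVec (veeM (skewPart (KR * Re t))))
        - Kω.mulVec (eω t)
        - (hatM (eω t)).mulVec (J.mulVec (eω t))
        - (hatM (eω t)).mulVec (J.mulVec (ωp t))) :
    ∀ t, HasDerivAt
        (fun s => (1 / 2) * (eω s ⬝ᵥ J.mulVec (eω s)) + PsiK KR (Re s))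
        (-(eω t ⬝ᵥ Kω.mulVec (eω t))) t ∧
      -(eω t ⬝ᵥ Kω.mulVec (eω t)) ≤ 0 :=
  lyapunov_attitude_error_general J Kω KR hJ hKω Re eω Rp ωp hRp hdRe deω hdeω hdyn
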